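/- arXiv:2605.26356 — 3 statements merged into one kernel-verified Lean document; each statement's English description precedes it below -/
import Mathlib

section
/- Let d1, d2, dy, N be positive natural numbers, let x1^1,...,x1^N ∈ ℝ^{d1}, x2^1,...,x2^N ∈ ℝ^{d2}, y^1,...,y^N ∈ ℝ^{dy}, let W1 ∈ ℝ^{dy×d1}, W2 ∈ ℝ^{dy×d2}, and let η > 0. Define the one-step gradient-descent updates ΔW1 = -(η/N) Σ_{i=1}^N (W1 x1^i + W2 x2^i − y^i) (x1^i)ᵀ and ΔW2 = -(η/N) Σ_{i=1}^N (W1 x1^i + W2 x2^i − y^i) (x2^i)ᵀ. Then there exist square matrices P, W_V, W_K, W_Q of size (d1+d2+dy)×(d1+d2+dy), depending only on W1, W2, η, N (and not on the tokens), such that for every query token e_j = (x1^j, x2^j, y^j) ∈ ℝ^{d1+d2+dy}, the linear self-attention output P · (Σ_{i=1}^N (W_V e_i)(W_K e_i)ᵀ) · (W_Q e_j) equals the vector (0, 0, ΔW1 x1^j + ΔW2 x2^j) ∈ ℝ^{d1+d2+dy}, where e_i = (x1^i, x2^i, y^i) are the context tokens. In particular, the update e_j ← e_j + P(Σ_i (W_V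 e_i)(W_K e_i)ᵀ)(W_Q e_j) changes only the y-coordinate of e_j, by exactly the prediction shift ΔW1 x1^j + ΔW2 x2^j of one gradient-descent step. -/
open Matrix BigOperators

section Aux

variable {R : Type*} [CommRing R]

lemma aux_sum_mulVec {m n ι : Type*} [Fintype n] (s : Finset ι)
    (M : ι → Matrix m n R) (v : n → R) :
    (∑ i ∈ s, M i).mulVec v = ∑ i ∈ s, (M i).mulVec v := by
  funext a
  simp only [Matrix.mulVec, dotProduct, Matrix.sum_apply, Finset.sum_mul,
    Finset.sum_apply]
  rw [Finset.sum_comm]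

lemma aux_mulVec_sum {m n ι : Type*} [Fintype n] (s : Finset ι)
    (M : Matrix m n R) (v : ι → n → R) :
    M.mulVec (∑ i ∈ s, v i) = ∑ i ∈ s, M.mulVec (v i) := by
  funext a
  simp only [Matrix.mulVec, dotProduct, Finset.sum_apply, Finset.mul_sum]
  rw [Finset.sum_comm]

lemma aux_vecMulVec_mulVec {m n : Type*} [Fintype n]
    (w : m → R) (u v : n → R) :
    (vecMulVec w u).mulVec v = (u ⬝ᵥ v) • w := by
  funext a
  simp [Matrix.mulVec, vecMulVec_apply, dotProduct, Finset.mul_sum, Finset.sum_mul,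
    mul_assoc, mul_comm, mul_left_comm]

end Aux
/-- One linear self-attention layer can implement one gradient-descent step on the
unified linearized RAG loss: there exist projection/value/key/query matrices,
depending only on `W1`, `W2`, `η`, `N` (not on the tokens), such that for all context
tokens `e_i = (x1^i, x2^i, y^i)` and every query token `e_j = (x1^j, x2^j, y^j)`, the
LSA output `P (Σ_i (W_V e_i)(W_K e_i)ᵀ) (W_Q e_j)` equals
`(0, 0, ΔW1 x1^j + ΔW2 x2^j)`, the prediction shift of one GD step. -/
theorem lsa_implements_one_rag_gradient_step
    (d1 d2 dy N : ℕ) (hd1 : 0 < d1) (hd2 : 0 < d2) (hdy : 0 < dy) (hN : 0 < N)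
    (W1 : Matrix (Fin dy) (Fin d1) ℝ) (W2 : Matrix (Fin dy) (Fin d2) ℝ)
    (η : ℝ) (hη : 0 < η) :
    ∃ P WV WK WQ :
        Matrix (Fin d1 ⊕ Fin d2 ⊕ Fin dy) (Fin d1 ⊕ Fin d2 ⊕ Fin dy) ℝ,
      ∀ (x1 : Fin N → Fin d1 → ℝ) (x2 : Fin N → Fin d2 → ℝ)
        (y : Fin N → Fin dy → ℝ)
        (x1j : Fin d1 → ℝ) (x2j : Fin d2 → ℝ) (yj : Fin dy → ℝ),
        -- context tokens `e_i = (x1^i, x2^i, y^i)`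
        let e : Fin N → (Fin d1 ⊕ Fin d2 ⊕ Fin dy) → ℝ :=
          fun i => Sum.elim (x1 i) (Sum.elim (x2 i) (y i))
        -- query token `e_j = (x1^j, x2^j, y^j)`
        let ej : (Fin d1 ⊕ Fin d2 ⊕ Fin dy) → ℝ :=
          Sum.elim x1j (Sum.elim x2j yj)
        -- one-step gradient-descent updates
        let ΔW1 : Matrix (Fin dy) (Fin d1) ℝ :=
          (-(η / (N : ℝ))) •
            ∑ i, vecMulVec (W1.mulVec (x1 i) + W2.mulVec (x2 i) - y i) (x1 i)
        let ΔW2 : Matrix (Fin dy) (Fin d2) ℝ :=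
          (-(η / (N : ℝ))) •
            ∑ i, vecMulVec (W1.mulVec (x1 i) + W2.mulVec (x2 i) - y i) (x2 i)
        P.mulVec
            ((∑ i, vecMulVec (WV.mulVec (e i)) (WK.mulVec (e i))).mulVec
              (WQ.mulVec ej))
          = Sum.elim (0 : Fin d1 → ℝ)
              (Sum.elim (0 : Fin d2 → ℝ) (ΔW1.mulVec x1j + ΔW2.mulVec x2j)) := by
  classical
  set c : ℝ := -(η / (N : ℝ)) with hc
  refine ⟨fromBlocks 0 0 0 (fromBlocks 0 0 0 (c • 1)),
      fromBlocks 0 0 (fromRows 0 W1) (fromBlocks 0 0 W2 (-1)),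
      fromBlocks 1 0 0 (fromBlocks 1 0 0 0),
      fromBlocks 1 0 0 (fromBlocks 1 0 0 0), ?_⟩
  intro x1 x2 y x1j x2j yj e ej ΔW1 ΔW2
  -- residuals
  set r : Fin N → Fin dy → ℝ :=
    fun i => W1.mulVec (x1 i) + W2.mulVec (x2 i) - y i with hr
  have hK : ∀ (u : Fin d1 → ℝ) (v : Fin d2 → ℝ) (w : Fin dy → ℝ),
      (fromBlocks 1 0 0 (fromBlocks 1 0 0 0) :
        Matrix (Fin d1 ⊕ Fin d2 ⊕ Fin dy) (Fin d1 ⊕ Fin d2 ⊕ Fin dy) ℝ).mulVec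
        (Sum.elim u (Sum.elim v w)) = Sum.elim u (Sum.elim v 0) := by
    intro u v w
    simp [fromBlocks_mulVec]
  have hV : ∀ (u : Fin d1 → ℝ) (v : Fin d2 → ℝ) (w : Fin dy → ℝ),
      (fromBlocks 0 0 (fromRows 0 W1) (fromBlocks 0 0 W2 (-1)) :
        Matrix (Fin d1 ⊕ Fin d2 ⊕ Fin dy) (Fin d1 ⊕ Fin d2 ⊕ Fin dy) ℝ).mulVec
        (Sum.elim u (Sum.elim v w))
        = Sum.elim (0 : Fin d1 → ℝ) (Sum.elim (0 : Fin d2 → ℝ)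
            (W1.mulVec u + W2.mulVec v - w)) := by
    intro u v w
    funext a
    rcases a with a | a | a <;>
      simp [fromBlocks_mulVec, fromRows_mulVec, Matrix.neg_mulVec, sub_eq_add_neg,
        add_assoc]
  have hP : ∀ (u : Fin d1 → ℝ) (v : Fin d2 → ℝ) (w : Fin dy → ℝ),
      (fromBlocks 0 0 0 (fromBlocks 0 0 0 (c • (1 : Matrix (Fin dy) (Fin dy) ℝ))) :
        Matrix (Fin d1 ⊕ Fin d2 ⊕ Fin dy) (Fin d1 ⊕ Fin d2 ⊕ Fin dy) ℝ).mulVec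
        (Sum.elim u (Sum.elim v w))
        = Sum.elim (0 : Fin d1 → ℝ) (Sum.elim (0 : Fin d2 → ℝ) (c • w)) := by
    intro u v w
    funext a
    rcases a with a | a | a <;>
      simp [fromBlocks_mulVec, smul_mulVec]
  -- compute the inner sum applied to the query
  have key : (∑ i, vecMulVec
        ((fromBlocks 0 0 (fromRows 0 W1) (fromBlocks 0 0 W2 (-1)) :
          Matrix (Fin d1 ⊕ Fin d2 ⊕ Fin dy) (Fin d1 ⊕ Fin d2 ⊕ Fin dy) ℝ).mulVec (e i))
        ((fromBlocks 1 0 0 (fromBlocks 1 0 0 0) :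
          Matrix (Fin d1 ⊕ Fin d2 ⊕ Fin dy) (Fin d1 ⊕ Fin d2 ⊕ Fin dy) ℝ).mulVec (e i))).mulVec
        ((fromBlocks 1 0 0 (fromBlocks 1 0 0 0) :
          Matrix (Fin d1 ⊕ Fin d2 ⊕ Fin dy) (Fin d1 ⊕ Fin d2 ⊕ Fin dy) ℝ).mulVec ej)
      = Sum.elim (0 : Fin d1 → ℝ) (Sum.elim (0 : Fin d2 → ℝ)
          (∑ i, ((x1 i ⬝ᵥ x1j) + (x2 i ⬝ᵥ x2j)) • r i)) := by
    rw [aux_sum_mulVec]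
    have h1 : ∀ i : Fin N, (vecMulVec
        ((fromBlocks 0 0 (fromRows 0 W1) (fromBlocks 0 0 W2 (-1)) :
          Matrix (Fin d1 ⊕ Fin d2 ⊕ Fin dy) (Fin d1 ⊕ Fin d2 ⊕ Fin dy) ℝ).mulVec (e i))
        ((fromBlocks 1 0 0 (fromBlocks 1 0 0 0) :
          Matrix (Fin d1 ⊕ Fin d2 ⊕ Fin dy) (Fin d1 ⊕ Fin d2 ⊕ Fin dy) ℝ).mulVec (e i))).mulVec
        ((fromBlocks 1 0 0 (fromBlocks 1 0 0 0) :
          Matrix (Fin d1 ⊕ Fin d2 ⊕ Fin dy) (Fin d1 ⊕ Fin d2 ⊕ Fin dy) ℝ).mulVec ej)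
        = ((x1 i ⬝ᵥ x1j) + (x2 i ⬝ᵥ x2j)) •
            Sum.elim (0 : Fin d1 → ℝ) (Sum.elim (0 : Fin d2 → ℝ) (r i)) := by
      intro i
      rw [show e i = Sum.elim (x1 i) (Sum.elim (x2 i) (y i)) from rfl,
        show ej = Sum.elim x1j (Sum.elim x2j yj) from rfl,
        hV, hK, hK, aux_vecMulVec_mulVec, sumElim_dotProduct_sumElim,
        sumElim_dotProduct_sumElim]
      simp [hr]
    rw [Finset.sum_congr rfl (fun i _ => h1 i)]
    funext a
    rcases a with a | a | a <;>
      simp [Finset.sum_apply, Pi.smul_apply]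
  rw [key, hP]
  congr 1
  funext a
  rcases a with a | a
  · rfl
  congr 1
  -- reduce to the y-block identity
  have hΔ1 : ΔW1.mulVec x1j = c • ∑ i, (x1 i ⬝ᵥ x1j) • r i := by
    rw [show ΔW1 = c • ∑ i, vecMulVec (r i) (x1 i) from rfl, smul_mulVec,
      aux_sum_mulVec]
    congr 1
    exact Finset.sum_congr rfl fun i _ => aux_vecMulVec_mulVec _ _ _
  have hΔ2 : ΔW2.mulVec x2j = c • ∑ i, (x2 i ⬝ᵥ x2j) • r i := by
    rw [show ΔW2 = c • ∑ i, vecMulVec (r i) (x2 i) from rfl, smul_mulVec,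
      aux_sum_mulVec]
    congr 1
    exact Finset.sum_congr rfl fun i _ => aux_vecMulVec_mulVec _ _ _
  rw [hΔ1, hΔ2, ← smul_add]
  congr 1
  have hsplit : ∀ i : Fin N,
      ((x1 i ⬝ᵥ x1j) + (x2 i ⬝ᵥ x2j)) • r i
        = (x1 i ⬝ᵥ x1j) • r i + (x2 i ⬝ᵥ x2j) • r i :=
    fun i => add_smul _ _ _
  have hsum : ∑ i : Fin N, ((x1 i ⬝ᵥ x1j) + (x2 i ⬝ᵥ x2j)) • r i
      = (∑ i : Fin N, (x1 i ⬝ᵥ x1j) • r i) + ∑ i : Fin N, (x2 i ⬝ᵥ x2j) • r i :=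
    calc ∑ i : Fin N, ((x1 i ⬝ᵥ x1j) + (x2 i ⬝ᵥ x2j)) • r i
        = ∑ i : Fin N, ((x1 i ⬝ᵥ x1j) • r i + (x2 i ⬝ᵥ x2j) • r i) :=
          Finset.sum_congr rfl fun i _ => hsplit i
      _ = (∑ i : Fin N, (x1 i ⬝ᵥ x1j) • r i) + ∑ i : Fin N, (x2 i ⬝ᵥ x2j) • r i :=
          Finset.sum_add_distrib
  rw [hsum]
end

section
/- Let d1, d2, dy, N be positive natural numbers, let x1^i ∈ ℝ^{d1}, x2^i ∈ ℝ^{d2}, y^i ∈ ℝ^{dy} for i = 1,...,N, let W1 ∈ ℝ^{dy×d1}, W2 ∈ ℝ^{dy×d2}, η > 0, and let n = d1 + d2 + dy. Define the block matrices W_V = [[0,0,0],[0,0,0],[W1, W2, −I_{dy}]] ∈ ℝ^{n×n} and W_K = W_Q = blockdiag(I_{d1}, I_{d2}, 0_{dy}) ∈ ℝ^{n×n}. Then for every token e = (x1, x2, y) ∈ ℝ^n one has W_V e = (0, 0, W1 x1 + W2 x2 − y) and W_K e = (x1, x2, 0); and for every query token e_j = (x1^j, x2^j, y^j), the vector −(η/N)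 Σ_{i=1}^N (W_V e_i) · ((W_K e_i)ᵀ (W_Q e_j)) equals (0, 0, ΔW1 x1^j + ΔW2 x2^j), where e_i = (x1^i, x2^i, y^i), ΔW1 = -(η/N) Σ_{i=1}^N (W1 x1^i + W2 x2^i − y^i)(x1^i)ᵀ and ΔW2 = -(η/N) Σ_{i=1}^N (W1 x1^i + W2 x2^i − y^i)(x2^i)ᵀ. -/
open Matrix BigOperators

/-- Explicit construction: with value matrix `W_V = [[0,0,0],[0,0,0],[W1,W2,-I]]` and
`W_K = W_Q = blockdiag(I, I, 0)`, for every token `e = (x1,x2,y)` we have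
`W_V e = (0,0,W1 x1 + W2 x2 - y)` and `W_K e = (x1,x2,0)`, and the attention output
`-(η/N) Σ_i (W_V e_i) ((W_K e_i)ᵀ (W_Q e_j))` equals `(0,0,ΔW1 x1^j + ΔW2 x2^j)`. -/
theorem lsa_explicit_construction
    (d1 d2 dy N : ℕ) (hd1 : 0 < d1) (hd2 : 0 < d2) (hdy : 0 < dy) (hN : 0 < N)
    (x1 : Fin N → Fin d1 → ℝ) (x2 : Fin N → Fin d2 → ℝ) (y : Fin N → Fin dy → ℝ)
    (W1 : Matrix (Fin dy) (Fin d1) ℝ) (W2 : Matrix (Fin dy) (Fin d2) ℝ)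
    (η : ℝ) (hη : 0 < η) :
    -- W_V = [[0,0,0],[0,0,0],[W1, W2, -I]]
    let WV : Matrix (Fin d1 ⊕ Fin d2 ⊕ Fin dy) (Fin d1 ⊕ Fin d2 ⊕ Fin dy) ℝ :=
      Matrix.fromBlocks 0 0
        (Matrix.of (Sum.elim (fun _ _ => (0 : ℝ)) (fun k a => W1 k a)))
        (Matrix.fromBlocks 0 0 W2 (-(1 : Matrix (Fin dy) (Fin dy) ℝ)))
    -- W_K = W_Q = blockdiag(I_{d1}, I_{d2}, 0_{dy})
    let WK : Matrix (Fin d1 ⊕ Fin d2 ⊕ Fin dy) (Fin d1 ⊕ Fin d2 ⊕ Fin dy) ℝ :=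
      Matrix.fromBlocks 1 0 0 (Matrix.fromBlocks 1 0 0 0)
    let WQ := WK
    -- gradient-descent updates
    let ΔW1 : Matrix (Fin dy) (Fin d1) ℝ :=
      (-(η / (N : ℝ))) •
        ∑ i, vecMulVec (W1.mulVec (x1 i) + W2.mulVec (x2 i) - y i) (x1 i)
    let ΔW2 : Matrix (Fin dy) (Fin d2) ℝ :=
      (-(η / (N : ℝ))) •
        ∑ i, vecMulVec (W1.mulVec (x1 i) + W2.mulVec (x2 i) - y i) (x2 i)
    let e : Fin N → (Fin d1 ⊕ Fin d2 ⊕ Fin dy) → ℝ :=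
      fun i => Sum.elim (x1 i) (Sum.elim (x2 i) (y i))
    -- W_V e = (0, 0, W1 x1 + W2 x2 - y) and W_K e = (x1, x2, 0) for every token
    (∀ (a : Fin d1 → ℝ) (b : Fin d2 → ℝ) (c : Fin dy → ℝ),
        WV.mulVec (Sum.elim a (Sum.elim b c))
          = Sum.elim (0 : Fin d1 → ℝ)
              (Sum.elim (0 : Fin d2 → ℝ) (W1.mulVec a + W2.mulVec b - c)) ∧
        WK.mulVec (Sum.elim a (Sum.elim b c))
          = Sum.elim a (Sum.elim b (0 : Fin dy → ℝ))) ∧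
    -- the attention output equals the prediction shift, for every query token
    (∀ (x1j : Fin d1 → ℝ) (x2j : Fin d2 → ℝ) (yj : Fin dy → ℝ),
        (-(η / (N : ℝ))) •
            ∑ i, ((WK.mulVec (e i)) ⬝ᵥ
                (WQ.mulVec (Sum.elim x1j (Sum.elim x2j yj)))) • WV.mulVec (e i)
          = Sum.elim (0 : Fin d1 → ℝ)
              (Sum.elim (0 : Fin d2 → ℝ) (ΔW1.mulVec x1j + ΔW2.mulVec x2j))) := by
  intro WV WK WQ ΔW1 ΔW2 e
  have hV : ∀ (a : Fin d1 → ℝ) (b : Fin d2 → ℝ) (c : Fin dy → ℝ),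
      WV.mulVec (Sum.elim a (Sum.elim b c))
        = Sum.elim (0 : Fin d1 → ℝ)
            (Sum.elim (0 : Fin d2 → ℝ) (W1.mulVec a + W2.mulVec b - c)) := by
    intro a b c
    show (Matrix.fromBlocks 0 0 _ _).mulVec _ = _
    rw [Matrix.fromBlocks_mulVec, Matrix.fromBlocks_mulVec]
    funext x
    cases x with
    | inl k => simp [Matrix.mulVec, dotProduct]
    | inr k =>
      cases k with
      | inl k => simp [Matrix.mulVec, dotProduct]
      | inr k => simp [Matrix.mulVec, dotProduct, Matrix.one_apply, sub_eq_add_neg,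
          add_assoc, Finset.sum_ite_eq, Finset.sum_ite_eq']
  have hK : ∀ (a : Fin d1 → ℝ) (b : Fin d2 → ℝ) (c : Fin dy → ℝ),
      WK.mulVec (Sum.elim a (Sum.elim b c))
        = Sum.elim a (Sum.elim b (0 : Fin dy → ℝ)) := by
    intro a b c
    show (Matrix.fromBlocks 1 0 0 _).mulVec _ = _
    rw [Matrix.fromBlocks_mulVec, Matrix.fromBlocks_mulVec]
    simp
  refine ⟨fun a b c => ⟨hV a b c, hK a b c⟩, ?_⟩
  intro x1j x2j yj
  have he : ∀ i, e i = Sum.elim (x1 i) (Sum.elim (x2 i) (y i)) := fun i => rfl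
  calc (-(η / (N : ℝ))) •
            ∑ i, ((WK.mulVec (e i)) ⬝ᵥ
                (WQ.mulVec (Sum.elim x1j (Sum.elim x2j yj)))) • WV.mulVec (e i)
      = (-(η / (N : ℝ))) •
            ∑ i, ((x1 i ⬝ᵥ x1j + x2 i ⬝ᵥ x2j) •
              Sum.elim (0 : Fin d1 → ℝ) (Sum.elim (0 : Fin d2 → ℝ)
                (W1.mulVec (x1 i) + W2.mulVec (x2 i) - y i))) := by
        congr 1
        refine Finset.sum_congr rfl (fun i _ => ?_)
        rw [he, hV, hK]
        show (_ ⬝ᵥ WK.mulVec _) • _ = _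
        rw [hK]
        congr 1
        simp [dotProduct, Sum.elim]
    _ = Sum.elim (0 : Fin d1 → ℝ)
          (Sum.elim (0 : Fin d2 → ℝ) (ΔW1.mulVec x1j + ΔW2.mulVec x2j)) := by
        funext v
        cases v with
        | inl k => simp
        | inr k =>
          cases k with
          | inl k => simp
          | inr k =>
            simp only [Pi.smul_apply, Finset.sum_apply, Sum.elim_inr,
              Pi.add_apply, smul_eq_mul]
            have h1 : ΔW1.mulVec x1j k
                = (-(η / (N : ℝ))) * ∑ i, (x1 i ⬝ᵥ x1j) *
                    (W1.mulVec (x1 i) + W2.mulVec (x2 i) - y i) k := by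
              simp only [ΔW1, Matrix.mulVec, dotProduct, Matrix.smul_apply,
                Matrix.sum_apply, vecMulVec_apply, smul_eq_mul, Finset.mul_sum,
                Finset.sum_mul]
              rw [Finset.sum_comm]
              congr 1; funext i; congr 1; funext l; ring
            have h2 : ΔW2.mulVec x2j k
                = (-(η / (N : ℝ))) * ∑ i, (x2 i ⬝ᵥ x2j) *
                    (W1.mulVec (x1 i) + W2.mulVec (x2 i) - y i) k := by
              simp only [ΔW2, Matrix.mulVec, dotProduct, Matrix.smul_apply,
                Matrix.sum_apply, vecMulVec_apply, smul_eq_mul, Finset.mul_sum,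
                Finset.sum_mul]
              rw [Finset.sum_comm]
              congr 1; funext i; congr 1; funext l; ring
            rw [h1, h2, ← mul_add, ← Finset.sum_add_distrib]
            congr 1
            exact Finset.sum_congr rfl (fun i _ => by ring)
end

section
/- Let d1, d2, dy, N, K be positive natural numbers, let x1^i ∈ ℝ^{d1}, x2^i ∈ ℝ^{d2}, y^i ∈ ℝ^{dy} for i = 1,...,N, let η > 0, and let W1^{(0)} ∈ ℝ^{dy×d1}, W2^{(0)} ∈ ℝ^{dy×d2}. For t = 0,...,K−1 define ΔW1^{(t)} = -(η/N) Σ_{i=1}^N (W1^{(t)} x1^i + W2^{(t)} x2^i − y^i)(x1^i)ᵀ, ΔW2^{(t)} = -(η/N) Σ_{i=1}^N (W1^{(t)} x1^i + W2^{(t)} x2^i − y^i)(x2^i)ᵀ, and W_k^{(t+1)} = W_k^{(t)} + ΔW_k^{(t)} for k ∈ {1,2}. Then there exist for each t ∈ {0,...,K−1} matrices P^{(t)}, W_V^{(t)}, W_K^{(t)}, W_Q^{(t)} of size (d1+d2+dy)×(d1+d2+dy) (depending only on W1^{(t)}, W2^{(t)}, η, N) such that, if the query token e^{(0)} = (x1^{N+1},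 x2^{N+1}, ŷ^{(0)}) with ŷ^{(0)} = W1^{(0)} x1^{N+1} + W2^{(0)} x2^{N+1} is updated sequentially by e^{(t+1)} = e^{(t)} + P^{(t)} (Σ_{i=1}^N (W_V^{(t)} e_i)(W_K^{(t)} e_i)ᵀ)(W_Q^{(t)} e^{(t)}) with fixed context tokens e_i = (x1^i, x2^i, y^i), then each layer changes only the y-coordinate, and after K layers the y-coordinate of e^{(K)} equals ŷ^{(K)} = ŷ^{(0)} + Σ_{t=0}^{K−1} (ΔW1^{(t)} x1^{N+1} + ΔW2^{(t)} x2^{N+1}) = W1^{(K)} x1^{N+1} + W2^{(K)} x2^{N+1}, the prediction of the unified linearized RAG predictor after K gradient-descent steps. -/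
open Matrix BigOperators

lemma myVecMulVec_mulVec {m n : Type*} [Fintype n] (v : m → ℝ) (w u : n → ℝ) :
    (vecMulVec v w).mulVec u = (w ⬝ᵥ u) • v := by
  ext i
  simp only [vecMulVec, mulVec, dotProduct, of_apply, Pi.smul_apply, smul_eq_mul,
    Finset.sum_mul]
  exact Finset.sum_congr rfl fun j _ => by ring

lemma mySum_mulVec {ι m n : Type*} [Fintype n] (s : Finset ι) (M : ι → Matrix m n ℝ)
    (u : n → ℝ) : (∑ i ∈ s, M i).mulVec u = ∑ i ∈ s, (M i).mulVec u := by
  ext j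
  simp only [mulVec, dotProduct, Matrix.sum_apply, Finset.sum_mul]
  rw [Finset.sum_comm]
  simp [mulVec, dotProduct, Finset.sum_apply]

lemma myElim_add {m n : Type*} (a c : m → ℝ) (b d : n → ℝ) :
    Sum.elim a b + Sum.elim c d = Sum.elim (a + c) (b + d) := by
  ext (i | i) <;> simp

lemma mySmul_elim {m n : Type*} (c : ℝ) (a : m → ℝ) (b : n → ℝ) :
    c • Sum.elim a b = Sum.elim (c • a) (c • b) := by
  ext (i | i) <;> simp

lemma mySum_elim {ι m n : Type*} (s : Finset ι) (a : ι → m → ℝ) (b : ι → n → ℝ) :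
    ∑ i ∈ s, Sum.elim (a i) (b i) = Sum.elim (∑ i ∈ s, a i) (∑ i ∈ s, b i) := by
  ext (i | i) <;> simp


/-- Stacking `K` linear self-attention layers implements `K` gradient-descent steps
on the unified linearized RAG loss: given the GD iterates `W1^{(t)}, W2^{(t)}`, there
exist per-layer matrices `P^{(t)}, W_V^{(t)}, W_K^{(t)}, W_Q^{(t)}` (independent of
the query token) such that if the query token `e^{(0)} = (x1^{N+1}, x2^{N+1}, ŷ^{(0)})`
with `ŷ^{(0)} = W1^{(0)} x1^{N+1} + W2^{(0)} x2^{N+1}` is updated sequentially by the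
LSA layers with fixed context tokens, then each layer changes only the `y`-coordinate,
and after `K` layers the `y`-coordinate equals
`ŷ^{(0)} + Σ_{t<K} (ΔW1^{(t)} x1^{N+1} + ΔW2^{(t)} x2^{N+1})
 = W1^{(K)} x1^{N+1} + W2^{(K)} x2^{N+1}`. -/
theorem stacked_lsa_implements_K_gradient_steps
    (d1 d2 dy N K : ℕ)
    (hd1 : 0 < d1) (hd2 : 0 < d2) (hdy : 0 < dy) (hN : 0 < N) (hK : 0 < K)
    (x1 : Fin N → Fin d1 → ℝ) (x2 : Fin N → Fin d2 → ℝ) (y : Fin N → Fin dy → ℝ)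
    (η : ℝ) (hη : 0 < η)
    (W1 : ℕ → Matrix (Fin dy) (Fin d1) ℝ) (W2 : ℕ → Matrix (Fin dy) (Fin d2) ℝ)
    -- gradient-descent recurrence  W_k^{(t+1)} = W_k^{(t)} + ΔW_k^{(t)}
    (hW1 : ∀ t, W1 (t + 1) = W1 t +
      (-(η / (N : ℝ))) •
        ∑ i, vecMulVec
          ((W1 t).mulVec (x1 i) + (W2 t).mulVec (x2 i) - y i) (x1 i))
    (hW2 : ∀ t, W2 (t + 1) = W2 t +
      (-(η / (N : ℝ))) •
        ∑ i, vecMulVec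
          ((W1 t).mulVec (x1 i) + (W2 t).mulVec (x2 i) - y i) (x2 i)) :
    -- per-step updates and context tokens
    let ΔW1 : ℕ → Matrix (Fin dy) (Fin d1) ℝ := fun t =>
      (-(η / (N : ℝ))) •
        ∑ i, vecMulVec
          ((W1 t).mulVec (x1 i) + (W2 t).mulVec (x2 i) - y i) (x1 i)
    let ΔW2 : ℕ → Matrix (Fin dy) (Fin d2) ℝ := fun t =>
      (-(η / (N : ℝ))) •
        ∑ i, vecMulVec
          ((W1 t).mulVec (x1 i) + (W2 t).mulVec (x2 i) - y i) (x2 i)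
    let e : Fin N → (Fin d1 ⊕ Fin d2 ⊕ Fin dy) → ℝ :=
      fun i => Sum.elim (x1 i) (Sum.elim (x2 i) (y i))
    ∃ P WV WK WQ :
        ℕ → Matrix (Fin d1 ⊕ Fin d2 ⊕ Fin dy) (Fin d1 ⊕ Fin d2 ⊕ Fin dy) ℝ,
      ∀ (x1q : Fin d1 → ℝ) (x2q : Fin d2 → ℝ)
        (eSeq : ℕ → (Fin d1 ⊕ Fin d2 ⊕ Fin dy) → ℝ),
        -- initial query token with ŷ^{(0)} = W1^{(0)} x1q + W2^{(0)} x2q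
        eSeq 0 = Sum.elim x1q
            (Sum.elim x2q ((W1 0).mulVec x1q + (W2 0).mulVec x2q)) →
        -- sequential LSA updates with fixed context tokens
        (∀ t, t < K → eSeq (t + 1) = eSeq t +
            (P t).mulVec
              ((∑ i, vecMulVec ((WV t).mulVec (e i)) ((WK t).mulVec (e i))).mulVec
                ((WQ t).mulVec (eSeq t)))) →
        -- each layer changes only the y-coordinate ...
        (∀ t, t < K → ∀ a : Fin d1,
            eSeq (t + 1) (Sum.inl a) = eSeq t (Sum.inl a)) ∧
        (∀ t, t < K → ∀ b : Fin d2,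
            eSeq (t + 1) (Sum.inr (Sum.inl b)) = eSeq t (Sum.inr (Sum.inl b))) ∧
        -- ... and after K layers the y-coordinate is the K-step GD prediction
        (fun k => eSeq K (Sum.inr (Sum.inr k)))
          = (W1 0).mulVec x1q + (W2 0).mulVec x2q +
              ∑ t ∈ Finset.range K, ((ΔW1 t).mulVec x1q + (ΔW2 t).mulVec x2q) ∧
        (fun k => eSeq K (Sum.inr (Sum.inr k)))
          = (W1 K).mulVec x1q + (W2 K).mulVec x2q := by
  intro ΔW1 ΔW2 e
  set r : ℕ → Fin N → Fin dy → ℝ :=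
    fun t i => (W1 t).mulVec (x1 i) + (W2 t).mulVec (x2 i) - y i with hr
  set Pm : Matrix (Fin d1 ⊕ Fin d2 ⊕ Fin dy) (Fin d1 ⊕ Fin d2 ⊕ Fin dy) ℝ :=
    fromBlocks 0 0 0 (fromBlocks 0 0 0 ((-(η / (N : ℝ))) • (1 : Matrix (Fin dy) (Fin dy) ℝ)))
    with hPmDef
  set Q : Matrix (Fin d1 ⊕ Fin d2 ⊕ Fin dy) (Fin d1 ⊕ Fin d2 ⊕ Fin dy) ℝ :=
    fromBlocks 1 0 0 (fromBlocks 1 0 0 0) with hQDef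
  set V : ℕ → Matrix (Fin d1 ⊕ Fin d2 ⊕ Fin dy) (Fin d1 ⊕ Fin d2 ⊕ Fin dy) ℝ :=
    fun t => fromBlocks 0 0 (fromRows 0 (W1 t)) (fromBlocks 0 0 (W2 t) (-1)) with hVDef
  have hQmul : ∀ (v1 : Fin d1 → ℝ) (v2 : Fin d2 → ℝ) (v3 : Fin dy → ℝ),
      Q.mulVec (Sum.elim v1 (Sum.elim v2 v3)) = Sum.elim v1 (Sum.elim v2 0) := by
    intro v1 v2 v3
    simp [hQDef, fromBlocks_mulVec, Sum.elim_comp_inl, Sum.elim_comp_inr]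
  have hPmul : ∀ (v1 : Fin d1 → ℝ) (v2 : Fin d2 → ℝ) (v3 : Fin dy → ℝ),
      Pm.mulVec (Sum.elim v1 (Sum.elim v2 v3)) =
        Sum.elim (0 : Fin d1 → ℝ) (Sum.elim (0 : Fin d2 → ℝ) ((-(η / (N : ℝ))) • v3)) := by
    intro v1 v2 v3
    simp [hPmDef, fromBlocks_mulVec, Sum.elim_comp_inl, Sum.elim_comp_inr,
      smul_mulVec, Matrix.neg_mulVec, Matrix.one_mulVec]
  have hVe : ∀ t i, (V t).mulVec (e i) = Sum.elim (0 : Fin d1 → ℝ) (Sum.elim (0 : Fin d2 → ℝ) (r t i)) := by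
    intro t i
    show (V t).mulVec (Sum.elim (x1 i) (Sum.elim (x2 i) (y i))) = _
    simp [hVDef, fromBlocks_mulVec, fromRows_mulVec, Sum.elim_comp_inl, Sum.elim_comp_inr,
      myElim_add, hr, Matrix.neg_mulVec, sub_eq_add_neg, add_assoc]
  -- the attention update applied to any token with x-coordinates (x1q, x2q)
  refine ⟨fun _ => Pm, V, fun _ => Q, fun _ => Q, ?_⟩
  intro x1q x2q eSeq h0 hstep
  have hδ : ∀ t, (-(η / (N : ℝ))) •
      ∑ i, ((x1 i ⬝ᵥ x1q) + (x2 i ⬝ᵥ x2q)) • r t i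
      = (ΔW1 t).mulVec x1q + (ΔW2 t).mulVec x2q := by
    intro t
    simp only [ΔW1, ΔW2, smul_mulVec, mySum_mulVec, myVecMulVec_mulVec]
    rw [← smul_add, ← Finset.sum_add_distrib]
    congr 1
    refine Finset.sum_congr rfl fun i _ => ?_
    rw [add_smul]
  have hupd : ∀ t (v3 : Fin dy → ℝ),
      Pm.mulVec ((∑ i, vecMulVec ((V t).mulVec (e i)) (Q.mulVec (e i))).mulVec
        (Q.mulVec (Sum.elim x1q (Sum.elim x2q v3))))
      = Sum.elim (0 : Fin d1 → ℝ) (Sum.elim (0 : Fin d2 → ℝ) ((ΔW1 t).mulVec x1q + (ΔW2 t).mulVec x2q)) := by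
    intro t v3
    have he : ∀ i, Q.mulVec (e i) = Sum.elim (x1 i) (Sum.elim (x2 i) 0) := fun i =>
      hQmul (x1 i) (x2 i) (y i)
    rw [hQmul, mySum_mulVec]
    have : ∀ i : Fin N,
        (vecMulVec ((V t).mulVec (e i)) (Q.mulVec (e i))).mulVec
          (Sum.elim x1q (Sum.elim x2q 0))
        = Sum.elim (0 : Fin d1 → ℝ) (Sum.elim (0 : Fin d2 → ℝ) (((x1 i ⬝ᵥ x1q) + (x2 i ⬝ᵥ x2q)) • r t i)) := by
      intro i
      rw [myVecMulVec_mulVec, hVe, he, mySmul_elim, mySmul_elim]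
      simp [sumElim_dotProduct_sumElim]
    rw [Finset.sum_congr rfl fun i _ => this i, mySum_elim, mySum_elim, hPmul, hδ]
  -- closed form for the token sequence
  have hF : ∀ t, t ≤ K → eSeq t = Sum.elim x1q (Sum.elim x2q
      ((W1 0).mulVec x1q + (W2 0).mulVec x2q +
        ∑ s ∈ Finset.range t, ((ΔW1 s).mulVec x1q + (ΔW2 s).mulVec x2q))) := by
    intro t
    induction t with
    | zero => intro _; simpa using h0
    | succ t ih =>
      intro ht
      have ht' : t < K := Nat.lt_of_succ_le ht
      rw [hstep t ht', ih (le_of_lt ht'), hupd, myElim_add, myElim_add,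
        Finset.sum_range_succ]
      simp [add_assoc]
      try rfl
  have hWsum : ∀ n : ℕ, (W1 n).mulVec x1q + (W2 n).mulVec x2q =
      (W1 0).mulVec x1q + (W2 0).mulVec x2q +
        ∑ s ∈ Finset.range n, ((ΔW1 s).mulVec x1q + (ΔW2 s).mulVec x2q) := by
    intro n
    induction n with
    | zero => simp
    | succ n ih =>
      have hΔ1 : W1 (n + 1) = W1 n + ΔW1 n := hW1 n
      have hΔ2 : W2 (n + 1) = W2 n + ΔW2 n := hW2 n
      rw [hΔ1, hΔ2, Matrix.add_mulVec, Matrix.add_mulVec, Finset.sum_range_succ]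
      conv_rhs => rw [← add_assoc, ← ih]
      abel
  refine ⟨?_, ?_, ?_, ?_⟩
  · intro t ht a
    rw [hF (t + 1) (Nat.succ_le_of_lt ht), hF t (le_of_lt ht)]
    rfl
  · intro t ht b
    rw [hF (t + 1) (Nat.succ_le_of_lt ht), hF t (le_of_lt ht)]
    rfl
  · funext k
    rw [hF K le_rfl]
    simp
  · funext k
    rw [hF K le_rfl, hWsum K]
    simp
end
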